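/- arXiv:2502.04279 — 2 statements merged into one kernel-verified Lean document; each statement's English description precedes it below -/
import Mathlib

section
/- For a uniformly random σ : Fin (2n) → {-1,1} conditioned on ∑ σ(i) ∈ {-2,2}, given that the partial sum of the first j-1 entries equals r, the conditional probability that σ(j) = +1 equals [C(2n-j, (2n-j-r+1)/2) + C(2n-j, (2n-j-r-3)/2)] / [C(2n-j+1, (2n-j-r+3)/2) + C(2n-j+1, (2n-j-r-1)/2)]. -/
/-- `halfChoose a t` is the binomial coefficient `C(a, t/2)`, interpreted as `0`
when `t/2` is not an integer in `[0, a]` (note `Nat.choose` already vanishes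
above `a`). -/
def halfChoose (a : ℕ) (t : ℤ) : ℕ :=
  if 0 ≤ t ∧ t % 2 = 0 then a.choose (t / 2).toNat else 0

/-!
A `±1` sequence of length `K` with sum `s` has exactly `(K + s) / 2` entries `+1`, so there are
`C(K, (K + s)/2)` of them; prescribing its first entry to be `+1` leaves `C(K - 1, (K + s - 2)/2)`.
The conditioning event is a product: the first `j - 1` entries sum to `r`, and the remaining
`2n - j + 1` entries sum to `2 - r` or `-2 - r`. Both the event and its intersection with
`σ(j) = +1` therefore contain the number of admissible prefixes as a factor, which cancels in the
conditional probability, and what remains are the binomial counts of the suffixes.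
-/

open Finset

def spinSum {ι : Type*} [Fintype ι] (σ : ι → Bool) : ℤ := ∑ i, if σ i then 1 else -1

section Counting

variable {ι : Type*} [Fintype ι]

lemma spinSum_eq_two_mul_card_sub (σ : ι → Bool) :
    spinSum σ = 2 * #{i | σ i} - Fintype.card ι := by
  have h (b : Bool) : (if b then (1 : ℤ) else -1) = 2 * (if b then 1 else 0) - 1 := by
    cases b <;> rfl
  simp only [spinSum, h, sum_sub_distrib, ← mul_sum, sum_boole, sum_const, card_univ]
  simp

variable [DecidableEq ι]

lemma card_spinSum_eq (s : ℤ) :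
    #{σ : ι → Bool | spinSum σ = s} = halfChoose (Fintype.card ι) (Fintype.card ι + s) := by
  unfold halfChoose
  split_ifs with hs
  · obtain ⟨t, ht⟩ : ∃ t : ℕ, (Fintype.card ι : ℤ) + s = 2 * t :=
      ⟨((Fintype.card ι + s) / 2).toNat, by omega⟩
    rw [ht, show (2 * (t : ℤ) / 2).toNat = t by omega, ← card_univ, ← card_powersetCard]
    refine card_nbij' (fun σ ↦ ({i | σ i} : Finset ι)) (fun T i ↦ i ∈ T) ?_ ?_ ?_ ?_
    · intro σ hσ
      simp only [mem_coe, mem_filter, mem_univ, true_and, spinSum_eq_two_mul_card_sub] at hσ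
      simp only [mem_coe, mem_powersetCard, subset_univ, true_and]
      omega
    · intro T hT
      simp only [mem_coe, mem_powersetCard] at hT
      simp only [mem_coe, mem_filter, mem_univ, true_and, decide_eq_true_eq,
        spinSum_eq_two_mul_card_sub, filter_mem_eq_of_subset hT.1, hT.2]
      omega
    all_goals intro _ _; ext; simp
  · rw [card_eq_zero, filter_eq_empty_iff]
    intro σ _ hσ
    rw [spinSum_eq_two_mul_card_sub] at hσ
    omega

lemma card_spinSum_eq_or {s t : ℤ} (hst : s ≠ t) :
    #{σ : ι → Bool | spinSum σ = s ∨ spinSum σ = t}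
      = halfChoose (Fintype.card ι) (Fintype.card ι + s)
        + halfChoose (Fintype.card ι) (Fintype.card ι + t) := by
  rw [filter_or, card_union_of_disjoint (disjoint_filter.2 fun _ _ hs ht ↦ hst (hs.symm.trans ht)),
    card_spinSum_eq, card_spinSum_eq]

lemma spinSum_eq_add_spinSum_ne (σ : ι → Bool) (i₀ : ι) :
    spinSum σ = (if σ i₀ then 1 else -1) + spinSum (fun i : {i // i ≠ i₀} ↦ σ i) :=
  Fintype.sum_eq_add_sum_subtype_ne _ i₀

lemma card_spinSum_eq_and_apply {k : ℕ} (hk : Fintype.card ι = k + 1) (i₀ : ι) (s : ℤ) :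
    #{σ : ι → Bool | spinSum σ = s ∧ σ i₀ = true} = halfChoose k (k + s - 1) := by
  have hcard : Fintype.card {i // i ≠ i₀} = k := by simp [hk]
  calc #{σ : ι → Bool | spinSum σ = s ∧ σ i₀ = true}
      = #({true} ×ˢ ({τ : {i // i ≠ i₀} → Bool | spinSum τ = s - 1} : Finset _)) := by
        refine card_equiv (Equiv.funSplitAt i₀ Bool) fun σ ↦ ?_
        simp only [mem_filter, mem_univ, true_and, mem_product, mem_singleton,
          Equiv.funSplitAt_apply, spinSum_eq_add_spinSum_ne σ i₀]
        cases σ i₀ <;> simp only [↓reduceIte, Bool.false_eq_true, and_false, false_and, and_true,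
          true_and, ne_eq]
        omega
    _ = halfChoose k (k + s - 1) := by
        rw [card_product, card_singleton, one_mul, card_spinSum_eq, hcard, add_sub_assoc]

lemma card_spinSum_eq_or_and_apply {k : ℕ} (hk : Fintype.card ι = k + 1) (i₀ : ι) {s t : ℤ}
    (hst : s ≠ t) :
    #{σ : ι → Bool | (spinSum σ = s ∨ spinSum σ = t) ∧ σ i₀ = true}
      = halfChoose k (k + s - 1) + halfChoose k (k + t - 1) := by
  simp_rw [or_and_right]
  rw [filter_or,
    card_union_of_disjoint (disjoint_filter.2 fun _ _ hs ht ↦ hst (hs.1.symm.trans ht.1)),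
    card_spinSum_eq_and_apply hk, card_spinSum_eq_and_apply hk]

lemma card_filter_restrict_mem_and_restrict_mem {α : Type*} [Fintype α] [DecidableEq α]
    (p : ι → Prop) [DecidablePred p] (A : Finset ({i // p i} → α))
    (B : Finset ({i // ¬p i} → α)) :
    #{σ : ι → α | (fun i : {i // p i} ↦ σ i) ∈ A ∧ (fun i : {i // ¬p i} ↦ σ i) ∈ B}
      = #A * #B := by
  rw [← card_product]
  exact card_equiv (Equiv.piEquivPiSubtypeProd p _) (by simp)

end Counting

section PrefixSum

variable {ι : Type*} [Fintype ι] (p : ι → Prop) [DecidablePred p]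

lemma spinSum_eq_spinSum_restrict_add (σ : ι → Bool) :
    spinSum σ = spinSum (fun i : {i // p i} ↦ σ i) + spinSum (fun i : {i // ¬p i} ↦ σ i) :=
  (Fintype.sum_subtype_add_sum_subtype p _).symm

lemma sum_filter_eq_spinSum_restrict (σ : ι → Bool) :
    ∑ i with p i, (if σ i then (1 : ℤ) else -1) = spinSum (fun i : {i // p i} ↦ σ i) := by
  rw [← sum_subtype_eq_sum_filter, subtype_univ]
  rfl

variable [DecidableEq ι]

def foldableWithPrefixSum (r : ℤ) : Finset (ι → Bool) :=
  {σ | (spinSum σ = 2 ∨ spinSum σ = -2) ∧ ∑ i with p i, (if σ i then (1 : ℤ) else -1) = r}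

lemma card_foldableWithPrefixSum {k : ℕ} (hk : Fintype.card {i // ¬p i} = k + 1) (r : ℤ) :
    #(foldableWithPrefixSum p r) = #{a : {i // p i} → Bool | spinSum a = r}
      * (halfChoose (k + 1) (k - r + 3) + halfChoose (k + 1) (k - r - 1)) := by
  rw [foldableWithPrefixSum, filter_congr fun σ _ ↦ show _ ↔
      (fun i : {i // p i} ↦ σ i) ∈ ({a | spinSum a = r} : Finset ({i // p i} → Bool)) ∧
      (fun i : {i // ¬p i} ↦ σ i) ∈ ({b | spinSum b = 2 - r ∨ spinSum b = -2 - r} :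
        Finset ({i // ¬p i} → Bool)) by
    simp only [mem_filter, mem_univ, true_and]
    rw [spinSum_eq_spinSum_restrict_add p σ, sum_filter_eq_spinSum_restrict]
    omega,
    card_filter_restrict_mem_and_restrict_mem, card_spinSum_eq_or (by omega : 2 - r ≠ -2 - r), hk]
  push_cast
  ring_nf

lemma card_filter_foldableWithPrefixSum_apply {k : ℕ} (hk : Fintype.card {i // ¬p i} = k + 1)
    {i₀ : ι} (hi₀ : ¬p i₀) (r : ℤ) :
    #{σ ∈ foldableWithPrefixSum p r | σ i₀ = true} = #{a : {i // p i} → Bool | spinSum a = r}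
      * (halfChoose k (k - r + 1) + halfChoose k (k - r - 3)) := by
  rw [foldableWithPrefixSum, filter_filter, filter_congr fun σ _ ↦ show _ ↔
      (fun i : {i // p i} ↦ σ i) ∈ ({a | spinSum a = r} : Finset ({i // p i} → Bool)) ∧
      (fun i : {i // ¬p i} ↦ σ i) ∈ ({b | (spinSum b = 2 - r ∨ spinSum b = -2 - r) ∧
        b ⟨i₀, hi₀⟩ = true} : Finset ({i // ¬p i} → Bool)) by
    simp only [mem_filter, mem_univ, true_and]
    rw [spinSum_eq_spinSum_restrict_add p σ, sum_filter_eq_spinSum_restrict]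
    cases σ i₀ <;> simp only [and_true, and_false, Bool.false_eq_true]
    omega,
    card_filter_restrict_mem_and_restrict_mem,
    card_spinSum_eq_or_and_apply hk _ (by omega : 2 - r ≠ -2 - r)]
  ring_nf

end PrefixSum

/-- For a uniformly random `σ : Fin (2n) → {-1,1}` conditioned on
`∑ σ(i) ∈ {-2,2}`, given that the partial sum of the first `j-1` entries equals
`r`, the conditional probability that `σ(j) = +1` equals
`[C(2n-j, (2n-j-r+1)/2) + C(2n-j, (2n-j-r-3)/2)] /
 [C(2n-j+1, (2n-j-r+3)/2) + C(2n-j+1, (2n-j-r-1)/2)]`.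
Assignments are modeled as `σ : Fin (2n) → Bool`, `true ↦ +1`, `false ↦ -1`;
crease labels run over `1, …, 2n`, so crease `j` is the index `j - 1` in
`Fin (2n)`. Conditional probability is expressed as a ratio of counts under
the uniform measure on the conditioning event. -/
theorem stmt_2 (n j : ℕ) (hj1 : 1 ≤ j) (hj2 : j ≤ 2 * n) (r : ℤ)
    (E : Finset (Fin (2 * n) → Bool))
    (hE : E = Finset.univ.filter
        (fun σ : Fin (2 * n) → Bool =>
          ((∑ i, (if σ i then (1 : ℤ) else -1)) = 2 ∨
            (∑ i, (if σ i then (1 : ℤ) else -1)) = -2) ∧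
          (∑ i ∈ Finset.univ.filter (fun i : Fin (2 * n) => (i : ℕ) < j - 1),
              (if σ i then (1 : ℤ) else -1)) = r))
    (hpos : E.card ≠ 0) :
    ((E.filter (fun σ => σ ⟨j - 1, by omega⟩ = true)).card : ℚ) / E.card
      = ((halfChoose (2 * n - j) ((2 * n : ℤ) - j - r + 1)
            + halfChoose (2 * n - j) ((2 * n : ℤ) - j - r - 3) : ℕ) : ℚ)
        / ((halfChoose (2 * n - j + 1) ((2 * n : ℤ) - j - r + 3)
            + halfChoose (2 * n - j + 1) ((2 * n : ℤ) - j - r - 1) : ℕ) : ℚ) := by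
  let p : Fin (2 * n) → Prop := fun i ↦ (i : ℕ) < j - 1
  have hk : Fintype.card {i // ¬p i} = 2 * n - j + 1 := by
    rw [Fintype.card_subtype_compl, Fintype.card_fin_lt_of_le (by omega), Fintype.card_fin]
    omega
  have hE' : E = foldableWithPrefixSum p r := hE
  have hprefix : #{a : {i // p i} → Bool | spinSum a = r} ≠ 0 := by
    rw [hE', card_foldableWithPrefixSum p hk] at hpos
    exact left_ne_zero_of_mul hpos
  have hcast : ((2 * n - j : ℕ) : ℤ) = 2 * n - j := by omega
  rw [hE', card_filter_foldableWithPrefixSum_apply p hk (by simp [p]),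
    card_foldableWithPrefixSum p hk, hcast, Nat.cast_mul, Nat.cast_mul,
    mul_div_mul_left _ _ (by exact_mod_cast hprefix)]
end

section
/- If (a_{m,n})_{m,n≥1} is a family of positive reals satisfying a_{m+m',n} ≤ a_{m,n} a_{m',n} and a_{m,n+n'} ≤ a_{m,n} a_{m,n'} for all m,m',n,n', then lim_{m,n→∞} (log a_{m,n})/(mn) exists and equals inf_{m,n≥1} (log a_{m,n})/(mn). -/
open Filter

/-- Two-dimensional analogue of Fekete's lemma: if `(a_{m,n})_{m,n≥1}` are
reals with `a_{m,n} ≥ 1` satisfying `a_{m+m',n} ≤ a_{m,n} a_{m',n}` and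
`a_{m,n+n'} ≤ a_{m,n} a_{m,n'}`, then `lim_{m,n→∞} (log a_{m,n})/(mn)` exists
and equals `inf_{m,n≥1} (log a_{m,n})/(mn)`. -/
theorem stmt_11 (a : ℕ → ℕ → ℝ) (h1 : ∀ m n, 1 ≤ a m n)
    (hsub1 : ∀ m m' n : ℕ, 1 ≤ m → 1 ≤ m' → 1 ≤ n →
      a (m + m') n ≤ a m n * a m' n)
    (hsub2 : ∀ m n n' : ℕ, 1 ≤ m → 1 ≤ n → 1 ≤ n' →
      a m (n + n') ≤ a m n * a m n') :
    Tendsto (fun p : ℕ × ℕ => Real.log (a p.1 p.2) / (p.1 * p.2)) atTop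
      (nhds (⨅ q : {q : ℕ × ℕ // 1 ≤ q.1 ∧ 1 ≤ q.2},
        Real.log (a q.1.1 q.1.2) / (q.1.1 * q.1.2))) := by
  set b : ℕ → ℕ → ℝ := fun m n => Real.log (a m n) with hbdef
  have hapos : ∀ m n, 0 < a m n := fun m n => lt_of_lt_of_le one_pos (h1 m n)
  have hb0 : ∀ m n, 0 ≤ b m n := fun m n => Real.log_nonneg (h1 m n)
  have hadd1 : ∀ m m' n : ℕ, 1 ≤ m → 1 ≤ m' → 1 ≤ n →
      b (m + m') n ≤ b m n + b m' n := by
    intro m m' n hm hm' hn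
    calc b (m + m') n ≤ Real.log (a m n * a m' n) :=
          Real.log_le_log (hapos _ _) (hsub1 m m' n hm hm' hn)
      _ = b m n + b m' n := Real.log_mul (hapos m n).ne' (hapos m' n).ne'
  have hadd2 : ∀ m n n' : ℕ, 1 ≤ m → 1 ≤ n → 1 ≤ n' →
      b m (n + n') ≤ b m n + b m n' := by
    intro m n n' hm hn hn'
    calc b m (n + n') ≤ Real.log (a m n * a m n') :=
          Real.log_le_log (hapos _ _) (hsub2 m n n' hm hn hn')
      _ = b m n + b m n' := Real.log_mul (hapos m n).ne' (hapos m n').ne'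
  -- iterated subadditivity in the first variable
  have hmul1 : ∀ k m n : ℕ, 1 ≤ k → 1 ≤ m → 1 ≤ n → b (k * m) n ≤ k * b m n := by
    intro k
    induction k with
    | zero => intro m n hk; omega
    | succ k ih =>
      intro m n _ hm hn
      rcases Nat.eq_zero_or_pos k with rfl | hk
      · simp
      · have h1' : b (k * m + m) n ≤ b (k * m) n + b m n :=
          hadd1 (k * m) m n (Nat.one_le_iff_ne_zero.2 (by positivity)) hm hn
        have h2' := ih m n hk hm hn
        have : b ((k + 1) * m) n ≤ (k : ℝ) * b m n + b m n := by
          rw [add_mul, one_mul]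
          exact h1'.trans (by linarith)
        calc b ((k + 1) * m) n ≤ (k : ℝ) * b m n + b m n := this
          _ = ((k + 1 : ℕ) : ℝ) * b m n := by push_cast; ring
  have hmul2 : ∀ k m n : ℕ, 1 ≤ k → 1 ≤ m → 1 ≤ n → b m (k * n) ≤ k * b m n := by
    intro k
    induction k with
    | zero => intro m n hk; omega
    | succ k ih =>
      intro m n _ hm hn
      rcases Nat.eq_zero_or_pos k with rfl | hk
      · simp
      · have h1' : b m (k * n + n) ≤ b m (k * n) + b m n :=
          hadd2 m (k * n) n hm (Nat.one_le_iff_ne_zero.2 (by positivity)) hn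
        have h2' := ih m n hk hm hn
        have : b m ((k + 1) * n) ≤ (k : ℝ) * b m n + b m n := by
          rw [add_mul, one_mul]
          exact h1'.trans (by linarith)
        calc b m ((k + 1) * n) ≤ (k : ℝ) * b m n + b m n := this
          _ = ((k + 1 : ℕ) : ℝ) * b m n := by push_cast; ring
  set B : ℝ := b 1 1 with hBdef
  have hB0 : 0 ≤ B := hb0 1 1
  -- crude global bound
  have hcrude : ∀ m n : ℕ, 1 ≤ m → 1 ≤ n → b m n ≤ (m : ℝ) * n * B := by
    intro m n hm hn
    have h1' : b m n ≤ (m : ℝ) * b 1 n := by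
      have := hmul1 m 1 n hm le_rfl hn
      simpa using this
    have h2' : b 1 n ≤ (n : ℝ) * B := by
      have := hmul2 n 1 1 hn le_rfl le_rfl
      simpa using this
    calc b m n ≤ (m : ℝ) * b 1 n := h1'
      _ ≤ (m : ℝ) * ((n : ℝ) * B) := by
          exact mul_le_mul_of_nonneg_left h2' (by positivity)
      _ = (m : ℝ) * n * B := by ring
  set f : ℕ → ℕ → ℝ := fun m n => b m n / (m * n) with hfdef
  have hbddBelow : BddBelow (Set.range fun q : {q : ℕ × ℕ // 1 ≤ q.1 ∧ 1 ≤ q.2} =>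
      Real.log (a q.1.1 q.1.2) / (q.1.1 * q.1.2)) := by
    refine ⟨0, ?_⟩
    rintro x ⟨⟨⟨m, n⟩, hm, hn⟩, rfl⟩
    have : (0 : ℝ) < (m : ℝ) * n := by
      have hm' : (0 : ℝ) < m := by exact_mod_cast hm
      have hn' : (0 : ℝ) < n := by exact_mod_cast hn
      positivity
    exact div_nonneg (hb0 m n) this.le
  set L : ℝ := ⨅ q : {q : ℕ × ℕ // 1 ≤ q.1 ∧ 1 ≤ q.2},
      Real.log (a q.1.1 q.1.2) / (q.1.1 * q.1.2) with hLdef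
  have hL_le : ∀ m n : ℕ, 1 ≤ m → 1 ≤ n → L ≤ f m n := by
    intro m n hm hn
    exact ciInf_le hbddBelow ⟨(m, n), hm, hn⟩
  haveI : Nonempty {q : ℕ × ℕ // 1 ≤ q.1 ∧ 1 ≤ q.2} := ⟨⟨(1, 1), le_rfl, le_rfl⟩⟩
  rw [Metric.tendsto_nhds]
  intro ε hε
  have hLlt : L < L + ε / 2 := by linarith
  obtain ⟨⟨⟨p, q⟩, hp, hq⟩, hpq_lt⟩ := exists_lt_of_ciInf_lt hLlt
  have hp' : (0 : ℝ) < p := by exact_mod_cast hp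
  have hq' : (0 : ℝ) < q := by exact_mod_cast hq
  -- choose threshold N
  obtain ⟨N₁, hN₁⟩ := exists_nat_gt ((8 * q * B + 8 * p * B) / ε)
  set N : ℕ := max N₁ (max (2 * p) (2 * q)) with hNdef
  have hN2p : 2 * p ≤ N := le_trans (le_max_left _ _) (le_max_right _ _)
  have hN2q : 2 * q ≤ N := le_trans (le_max_right _ _) (le_max_right _ _)
  have hNN₁ : N₁ ≤ N := le_max_left _ _
  have hNε : 8 * (q : ℝ) * B + 8 * p * B < N * ε := by
    have hN₁' : (8 * (q : ℝ) * B + 8 * p * B) / ε < (N₁ : ℝ) := hN₁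
    have : (N₁ : ℝ) ≤ N := by exact_mod_cast hNN₁
    rw [div_lt_iff₀ hε] at hN₁'
    nlinarith
  refine eventually_atTop.2 ⟨(N, N), ?_⟩
  rintro ⟨m, n⟩ hmn
  obtain ⟨hm, hn⟩ : N ≤ m ∧ N ≤ n := hmn
  have hm1 : 1 ≤ m := le_trans (by omega) hm
  have hn1 : 1 ≤ n := le_trans (by omega) hn
  have hm2p : 2 * p ≤ m := le_trans hN2p hm
  have hn2q : 2 * q ≤ n := le_trans hN2q hn
  have hm' : (0 : ℝ) < m := by exact_mod_cast hm1
  have hn' : (0 : ℝ) < n := by exact_mod_cast hn1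
  -- Euclidean-like decomposition with remainders in [p, 2p)
  set k : ℕ := m / p - 1 with hkdef
  set r : ℕ := m % p + p with hrdef
  set l : ℕ := n / q - 1 with hldef
  set s : ℕ := n % q + q with hsdef
  have hdiv_m : 2 ≤ m / p := (Nat.le_div_iff_mul_le (by omega)).2 (by omega)
  have hdiv_n : 2 ≤ n / q := (Nat.le_div_iff_mul_le (by omega)).2 (by omega)
  have hk1 : 1 ≤ k := by omega
  have hl1 : 1 ≤ l := by omega
  have hm_eq : k * p + r = m := by
    have h := Nat.div_add_mod m p
    have hd : m / p - 1 + 1 = m / p := by omega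
    calc k * p + r = (m / p - 1 + 1) * p + m % p := by rw [hkdef, hrdef]; ring
      _ = (m / p) * p + m % p := by rw [hd]
      _ = m := by rw [mul_comm]; exact h
  have hn_eq : l * q + s = n := by
    have h := Nat.div_add_mod n q
    have hd : n / q - 1 + 1 = n / q := by omega
    calc l * q + s = (n / q - 1 + 1) * q + n % q := by rw [hldef, hsdef]; ring
      _ = (n / q) * q + n % q := by rw [hd]
      _ = n := by rw [mul_comm]; exact h
  have hr_lt : r ≤ 2 * p := by have := Nat.mod_lt m (show 0 < p by omega); omega
  have hs_lt : s ≤ 2 * q := by have := Nat.mod_lt n (show 0 < q by omega); omega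
  have hr1 : 1 ≤ r := by omega
  have hs1 : 1 ≤ s := by omega
  have hkp1 : 1 ≤ k * p := Nat.one_le_iff_ne_zero.2 (by positivity)
  have hlq1 : 1 ≤ l * q := Nat.one_le_iff_ne_zero.2 (by positivity)
  have hkp_le : k * p ≤ m := by omega
  have hlq_le : l * q ≤ n := by omega
  -- the key chain of inequalities
  have step1 : b m n ≤ b (k * p) n + b r n := by
    rw [← hm_eq]; exact hadd1 (k * p) r n hkp1 hr1 hn1
  have step2 : b (k * p) n ≤ b (k * p) (l * q) + b (k * p) s := by
    conv_lhs => rw [← hn_eq]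
    exact hadd2 (k * p) (l * q) s hkp1 hlq1 hs1
  have step3 : b (k * p) (l * q) ≤ (k : ℝ) * ((l : ℝ) * b p q) := by
    have h3 : b (k * p) (l * q) ≤ (k : ℝ) * b p (l * q) :=
      hmul1 k p (l * q) hk1 hp hlq1
    have h4 : b p (l * q) ≤ (l : ℝ) * b p q := hmul2 l p q hl1 hp hq
    calc b (k * p) (l * q) ≤ (k : ℝ) * b p (l * q) := h3
      _ ≤ (k : ℝ) * ((l : ℝ) * b p q) := by
          exact mul_le_mul_of_nonneg_left h4 (by positivity)
  have step4 : b (k * p) s ≤ ((k * p : ℕ) : ℝ) * (2 * q) * B := by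
    have h5 : b (k * p) s ≤ ((k * p : ℕ) : ℝ) * s * B := hcrude (k * p) s hkp1 hs1
    have hs' : (s : ℝ) ≤ 2 * q := by exact_mod_cast hs_lt
    have hkp0 : (0 : ℝ) ≤ ((k * p : ℕ) : ℝ) := by positivity
    calc b (k * p) s ≤ ((k * p : ℕ) : ℝ) * s * B := h5
      _ ≤ ((k * p : ℕ) : ℝ) * (2 * q) * B := by
          apply mul_le_mul_of_nonneg_right _ hB0
          exact mul_le_mul_of_nonneg_left hs' hkp0
  have step5 : b r n ≤ 2 * (p : ℝ) * n * B := by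
    have h6 : b r n ≤ (r : ℝ) * n * B := hcrude r n hr1 hn1
    have hr' : (r : ℝ) ≤ 2 * p := by exact_mod_cast hr_lt
    calc b r n ≤ (r : ℝ) * n * B := h6
      _ ≤ 2 * (p : ℝ) * n * B := by
          apply mul_le_mul_of_nonneg_right _ hB0
          exact mul_le_mul_of_nonneg_right hr' hn'.le
  have key : b m n ≤ (k : ℝ) * l * b p q + 2 * (k : ℝ) * p * q * B
      + 2 * (p : ℝ) * n * B := by
    have h4 : ((k * p : ℕ) : ℝ) * (2 * q) * B = 2 * (k : ℝ) * p * q * B := by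
      push_cast; ring
    have step4' := step4.trans_eq h4
    linarith [step1, step2, step3, step4', step5]
  -- now bound f m n
  have hmn_pos : (0 : ℝ) < (m : ℝ) * n := by positivity
  have hkR : (k : ℝ) * p ≤ m := by exact_mod_cast hkp_le
  have hlR : (l : ℝ) * q ≤ n := by exact_mod_cast hlq_le
  have hA1 : (k : ℝ) * l * b p q / ((m : ℝ) * n) ≤ b p q / ((p : ℝ) * q) := by
    rw [div_le_div_iff₀ hmn_pos (by positivity)]
    have hprod : ((k : ℝ) * p) * ((l : ℝ) * q) ≤ (m : ℝ) * n :=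
      mul_le_mul hkR hlR (by positivity) hm'.le
    have h := mul_le_mul_of_nonneg_left hprod (hb0 p q)
    calc (k : ℝ) * l * b p q * ((p : ℝ) * q)
        = b p q * (((k : ℝ) * p) * ((l : ℝ) * q)) := by ring
      _ ≤ b p q * ((m : ℝ) * n) := h
  have hNm : (N : ℝ) ≤ m := by exact_mod_cast hm
  have hNn : (N : ℝ) ≤ n := by exact_mod_cast hn
  have hA2 : 2 * (k : ℝ) * p * q * B / ((m : ℝ) * n) < ε / 4 := by
    rw [div_lt_iff₀ hmn_pos]
    have hk2 := mul_le_mul_of_nonneg_right hkR (show (0:ℝ) ≤ 2 * q * B by positivity)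
    have hn2 := mul_le_mul_of_nonneg_right hNn hε.le
    have hpB : (0:ℝ) ≤ (p : ℝ) * B := by positivity
    have h2' : 8 * (q : ℝ) * B < (n : ℝ) * ε := by linarith
    have h3 := mul_lt_mul_of_pos_left h2' hm'
    linarith [h3, hk2]
  have hA3 : 2 * (p : ℝ) * n * B / ((m : ℝ) * n) < ε / 4 := by
    rw [div_lt_iff₀ hmn_pos]
    have hm2 := mul_le_mul_of_nonneg_right hNm hε.le
    have hqB : (0:ℝ) ≤ (q : ℝ) * B := by positivity
    have h2' : 8 * (p : ℝ) * B < (m : ℝ) * ε := by linarith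
    have h3 := mul_lt_mul_of_pos_left h2' hn'
    linarith [h3]
  have hsplit : f m n ≤ (k : ℝ) * l * b p q / ((m : ℝ) * n)
      + 2 * (k : ℝ) * p * q * B / ((m : ℝ) * n)
      + 2 * (p : ℝ) * n * B / ((m : ℝ) * n) := by
    rw [hfdef]
    simp only
    rw [← add_div, ← add_div]
    exact div_le_div_of_nonneg_right key hmn_pos.le |>.trans_eq rfl
  have hupper : f m n < L + ε := by
    have : b p q / ((p : ℝ) * q) < L + ε / 2 := hpq_lt
    calc f m n ≤ (k : ℝ) * l * b p q / ((m : ℝ) * n)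
        + 2 * (k : ℝ) * p * q * B / ((m : ℝ) * n)
        + 2 * (p : ℝ) * n * B / ((m : ℝ) * n) := hsplit
      _ < (L + ε / 2) + ε / 4 + ε / 4 := by
          have := hA1.trans_lt this
          linarith [hA2, hA3]
      _ = L + ε := by ring
  have hlower : L ≤ f m n := hL_le m n hm1 hn1
  have : dist (f m n) L < ε := by
    rw [Real.dist_eq, abs_lt]
    constructor <;> linarith
  simpa [hfdef] using this
end
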